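/- arXiv:1712.06248 — 6 statements merged into one kernel-verified Lean document; each statement's English description precedes it below -/
import Mathlib

section
/- Let C be a monoidal category satisfying conditions (I), (II) and (III), i.e. C is right rigid, Krull–Schmidt, and C(𝟙,𝟙) is a field. Then the following are equivalent: (i) C has precisely one tensor ideal other than the zero ideal and C itself; (ii) there exists an indecomposable object X ≇ 𝟙 such that C(𝟙,X) is a nonzero simple left C(X,X)-module and C(𝟙,Y) = 0 for every indecomposable Y not isomorphic to 𝟙 or X. -/
/-!
Right rigidity makes `J ↦ J(𝟙, -)` a bijection from tensor ideals onto submodules of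
`C(𝟙, -)`: a morphism `f : X ⟶ Y` lies in `J` iff its mate `𝟙 ⟶ X^∨ ⊗ Y` does, and every
submodule is recovered from the tensor ideal it generates. So (i) says that `C(𝟙, -)` has exactly
one submodule besides `0` and itself.

As `C(𝟙, 𝟙)` is a field, a proper submodule vanishes on objects isomorphic to `𝟙`, and by
Krull–Schmidt a submodule is determined by its values on indecomposables. If `M` is the unique
proper nonzero submodule, every nonzero `φ : 𝟙 ⟶ Y` with `Y ≇ 𝟙` indecomposable generates `M`.
Comparing two such generators forces `C(𝟙, X)` to be simple and, since endomorphism rings of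
indecomposables are local, any two such `Y` to be isomorphic. Conversely, under (ii) every proper
nonzero submodule is generated by any nonzero `𝟙 ⟶ X`.
-/

open CategoryTheory CategoryTheory.Limits CategoryTheory.MonoidalCategory

namespace TIP

attribute [local instance] CategoryTheory.Limits.hasBinaryBiproducts_of_finite_biproducts

universe v u v₂ u₂

section DirectSummand

variable {C : Type u} [Category.{v} C]

/-- `X` is a direct summand of `Y` (i.e. `X` is a retract of `Y`). -/
def IsDirectSummand (X Y : C) : Prop := ∃ (i : X ⟶ Y) (r : Y ⟶ X), i ≫ r = 𝟙 X

end DirectSummand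

section Submod

variable {C : Type u} [Category.{v} C] [Preadditive C]

/-- A subfunctor (submodule) of the representable module `P_Z = C(Z, -)`. -/
structure Submod (Z : C) where
  carrier : ∀ X : C, AddSubgroup (Z ⟶ X)
  map_mem : ∀ {X Y : C} (f : X ⟶ Y) {φ : Z ⟶ X}, φ ∈ carrier X → φ ≫ f ∈ carrier Y

theorem Submod.ext' {Z : C} {M N : Submod Z} (h : M.carrier = N.carrier) : M = N := by
  cases M; cases N; cases h; rfl

instance {Z : C} : PartialOrder (Submod Z) where
  le M N := ∀ X : C, M.carrier X ≤ N.carrier X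
  le_refl M X := le_rfl
  le_trans M N P h h' X := (h X).trans (h' X)
  le_antisymm M N h h' := Submod.ext' (funext fun X => le_antisymm (h X) (h' X))

/-- Post-composition with a fixed morphism, as an additive map. -/
def postcompHom (Z : C) {X Y : C} (f : X ⟶ Y) : (Z ⟶ X) →+ (Z ⟶ Y) where
  toFun g := g ≫ f
  map_zero' := Limits.zero_comp
  map_add' a b := Preadditive.add_comp _ _ _ _ _ _

/-- The trace submodule `Tr_S P_Z` of the representable module `P_Z`, for a class
of objects `S`. -/
def traceSub (Z : C) (S : Set C) : Submod Z where
  carrier Y := AddSubgroup.closure {h : Z ⟶ Y | ∃ W ∈ S, ∃ (b : Z ⟶ W) (a : W ⟶ Y), h = b ≫ a}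
  map_mem := by
    intro X Y f φ hφ
    have h1 : postcompHom Z f φ ∈ (AddSubgroup.closure
        {h : Z ⟶ X | ∃ W ∈ S, ∃ (b : Z ⟶ W) (a : W ⟶ X), h = b ≫ a}).map (postcompHom Z f) :=
      AddSubgroup.mem_map_of_mem _ hφ
    rw [AddMonoidHom.map_closure] at h1
    refine AddSubgroup.closure_mono ?_ h1
    rintro x ⟨h, ⟨W, hW, b, a, rfl⟩, rfl⟩
    exact ⟨W, hW, b, a ≫ f, by simp [postcompHom]⟩

/-- The action of the endomorphism ring `C(X,X)` on `C(Z,X)` by post-composition. -/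
instance endSMul {Z X : C} : SMul (End X) (Z ⟶ X) := ⟨fun e φ => φ ≫ e⟩

theorem end_smul_def {Z X : C} (e : End X) (φ : Z ⟶ X) : e • φ = φ ≫ e := rfl

/-- `C(Z,X)` is a left module over the endomorphism ring `C(X,X)`. -/
instance endModule {Z X : C} : Module (End X) (Z ⟶ X) where
  one_smul φ := by simp [end_smul_def, End.one_def]
  mul_smul e f φ := by simp [end_smul_def, End.mul_def]
  smul_zero e := by simp [end_smul_def]
  smul_add e φ ψ := Preadditive.add_comp _ _ _ _ _ _
  add_smul e f φ := Preadditive.comp_add _ _ _ _ _ _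
  zero_smul φ := by simp [end_smul_def]

end Submod

section KS

variable {C : Type u} [Category.{v} C] [Preadditive C] [HasBinaryBiproducts C]

/-- An object of an additive category is indecomposable if it is nonzero and
any decomposition as a biproduct has a zero summand. -/
def Indecomposable (X : C) : Prop :=
  ¬ IsZero X ∧ ∀ Y Z : C, Nonempty (X ≅ Y ⊞ Z) → IsZero Y ∨ IsZero Z

end KS

section KS2

variable (C : Type u) [Category.{v} C] [Preadditive C] [HasFiniteBiproducts C]

/-- A Krull-Schmidt category: every object is a finite biproduct of indecomposable
objects, and indecomposable objects have local endomorphism rings. -/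
structure IsKrullSchmidt : Prop where
  local_end : ∀ X : C, Indecomposable X → IsLocalRing (End X)
  decomp : ∀ X : C, ∃ (n : ℕ) (f : Fin n → C),
    (∀ i, Indecomposable (f i)) ∧ Nonempty (X ≅ ⨁ f)

end KS2

section Monoidal

variable {C : Type u} [Category.{v} C] [MonoidalCategory C]

/-- A right dual `(X^∨, ev_X, co_X)` of an object `X`, with
`ev_X : X ⊗ X^∨ ⟶ 𝟙` and `co_X : 𝟙 ⟶ X^∨ ⊗ X` satisfying the zigzag identities. -/
structure RightDual (X : C) where
  dual : C
  ev : X ⊗ dual ⟶ 𝟙_ C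
  coev : 𝟙_ C ⟶ dual ⊗ X
  zigzag₁ : (ρ_ X).inv ≫ (X ◁ coev) ≫ (α_ X dual X).inv ≫ (ev ▷ X) ≫ (λ_ X).hom = 𝟙 X
  zigzag₂ : (λ_ dual).inv ≫ (coev ▷ dual) ≫ (α_ dual X dual).hom ≫ (dual ◁ ev) ≫ (ρ_ dual).hom
      = 𝟙 dual

/-- The map `ι_{XY} : C(𝟙, X^∨ ⊗ Y) → C(X, Y)`, `φ ↦ (ev_X ⊗ 1_Y) ∘ (1_X ⊗ φ)`,
defined in terms of the raw data of a dual object and an evaluation morphism. -/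
def iotaRaw {X : C} (Xd : C) (ev : X ⊗ Xd ⟶ 𝟙_ C) {Y : C} (φ : 𝟙_ C ⟶ Xd ⊗ Y) : X ⟶ Y :=
  (ρ_ X).inv ≫ (X ◁ φ) ≫ (α_ X Xd Y).inv ≫ (ev ▷ Y) ≫ (λ_ Y).hom

/-- The isomorphism `ι_{XY} : C(𝟙, X^∨ ⊗ Y) → C(X, Y)`, `φ ↦ (ev_X ⊗ 1_Y) ∘ (1_X ⊗ φ)`. -/
def iota {X : C} (D : RightDual X) {Y : C} (φ : 𝟙_ C ⟶ D.dual ⊗ Y) : X ⟶ Y :=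
  iotaRaw D.dual D.ev φ

/-- The inverse of `ι_{XY}`, given by `f ↦ (1_{X^∨} ⊗ f) ∘ co_X`. -/
def iotaInv {X : C} (D : RightDual X) {Y : C} (f : X ⟶ Y) : 𝟙_ C ⟶ D.dual ⊗ Y :=
  D.coev ≫ (D.dual ◁ f)

end Monoidal

section TId

variable (C : Type u) [Category.{v} C] [Preadditive C] [MonoidalCategory C]

/-- A left-tensor ideal in a preadditive monoidal category. -/
structure TensorIdeal where
  carrier : ∀ X Y : C, AddSubgroup (X ⟶ Y)
  comp_pre : ∀ {W X Y : C} (g : W ⟶ X) {f : X ⟶ Y}, f ∈ carrier X Y → g ≫ f ∈ carrier W Y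
  comp_post : ∀ {X Y Z : C} {f : X ⟶ Y} (h : Y ⟶ Z), f ∈ carrier X Y → f ≫ h ∈ carrier X Z
  whisker_mem : ∀ (Z : C) {X Y : C} {f : X ⟶ Y}, f ∈ carrier X Y →
    Z ◁ f ∈ carrier (Z ⊗ X) (Z ⊗ Y)

variable {C}

theorem TensorIdeal.ext' {J K : TensorIdeal C} (h : J.carrier = K.carrier) : J = K := by
  cases J; cases K; cases h; rfl

instance : PartialOrder (TensorIdeal C) where
  le J K := ∀ X Y : C, J.carrier X Y ≤ K.carrier X Y
  le_refl J X Y := le_rfl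
  le_trans J K L h h' X Y := (h X Y).trans (h' X Y)
  le_antisymm J K h h' :=
    TensorIdeal.ext' (funext fun X => funext fun Y => le_antisymm (h X Y) (h' X Y))

variable (C)

/-- The tensor ideal of all morphisms. -/
def TensorIdeal.top : TensorIdeal C where
  carrier _ _ := ⊤
  comp_pre := by intros; exact AddSubgroup.mem_top _
  comp_post := by intros; exact AddSubgroup.mem_top _
  whisker_mem := by intros; exact AddSubgroup.mem_top _

variable {C}

/-- `Ψ` maps a tensor ideal `J` to the subfunctor `J(𝟙, -)` of the principal module
`P_𝟙 = C(𝟙, -)`. -/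
def Psi (J : TensorIdeal C) : Submod (𝟙_ C) where
  carrier X := J.carrier (𝟙_ C) X
  map_mem := by intro X Y f φ hφ; exact J.comp_post f hφ

variable (C) [MonoidalPreadditive C]

/-- The zero tensor ideal. -/
def TensorIdeal.bot : TensorIdeal C where
  carrier _ _ := ⊥
  comp_pre := by
    intro W X Y g f hf
    rw [AddSubgroup.mem_bot] at *
    rw [hf, Limits.comp_zero]
  comp_post := by
    intro X Y Z f h hf
    rw [AddSubgroup.mem_bot] at *
    rw [hf, Limits.zero_comp]
  whisker_mem := by
    intro Z X Y f hf
    rw [AddSubgroup.mem_bot] at *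
    rw [hf, MonoidalPreadditive.whiskerLeft_zero]

end TId

section Thick

variable (C : Type u) [Category.{v} C] [Preadditive C] [MonoidalCategory C]
  [HasBinaryBiproducts C]

/-- A thick left-tensor Ob-ideal: an isomorphism closed class of objects, closed under
direct sums, direct summands, and tensoring on the left by arbitrary objects. -/
structure ThickIdeal where
  carrier : Set C
  iso_mem : ∀ {X Y : C}, (X ≅ Y) → X ∈ carrier → Y ∈ carrier
  biprod_mem_iff : ∀ X Y : C, ((X ⊞ Y) ∈ carrier ↔ (X ∈ carrier ∧ Y ∈ carrier))
  tensor_mem : ∀ (Y : C) {X : C}, X ∈ carrier → (Y ⊗ X) ∈ carrier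

variable {C}

theorem ThickIdeal.ext' {I I' : ThickIdeal C} (h : I.carrier = I'.carrier) : I = I' := by
  cases I; cases I'; cases h; rfl

instance : PartialOrder (ThickIdeal C) where
  le I I' := I.carrier ⊆ I'.carrier
  le_refl I := Set.Subset.refl _
  le_trans I I' I'' h h' := Set.Subset.trans h h'
  le_antisymm I I' h h' := ThickIdeal.ext' (le_antisymm h h')

/-- The decategorification map `Ob`, sending a tensor ideal `J` to the thick
left-tensor Ob-ideal of objects `X` with `1_X ∈ J(X,X)`. -/
def obIdeal (J : TensorIdeal C) : ThickIdeal C where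
  carrier := {X : C | 𝟙 X ∈ J.carrier X X}
  iso_mem := by
    intro X Y e hX
    have h := J.comp_pre e.inv (J.comp_post e.hom hX)
    simpa using h
  biprod_mem_iff := by
    intro X Y
    constructor
    · intro h
      constructor
      · have h1 := J.comp_pre (biprod.inl : X ⟶ X ⊞ Y) (J.comp_post (biprod.fst : X ⊞ Y ⟶ X) h)
        simpa using h1
      · have h1 := J.comp_pre (biprod.inr : Y ⟶ X ⊞ Y) (J.comp_post (biprod.snd : X ⊞ Y ⟶ Y) h)
        simpa using h1
    · rintro ⟨hX, hY⟩
      have h1 := J.comp_pre (biprod.fst : X ⊞ Y ⟶ X) (J.comp_post (biprod.inl : X ⟶ X ⊞ Y) hX)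
      have h2 := J.comp_pre (biprod.snd : X ⊞ Y ⟶ Y) (J.comp_post (biprod.inr : Y ⟶ X ⊞ Y) hY)
      simp only [Category.id_comp] at h1 h2
      have h3 := AddSubgroup.add_mem _ h1 h2
      rw [biprod.total] at h3
      exact h3
  tensor_mem := by
    intro Y X hX
    have h := J.whisker_mem Y hX
    simpa using h

end Thick

section Braided

variable {C : Type u} [Category.{v} C] [MonoidalCategory C] [BraidedCategory C]

/-- The trace of an endomorphism, with respect to a choice of right duals. -/
def traceMor (D : ∀ X : C, RightDual X) {X : C} (f : X ⟶ X) : 𝟙_ C ⟶ 𝟙_ C :=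
  (D X).coev ≫ ((D X).dual ◁ f) ≫ (β_ (D X).dual X).hom ≫ (D X).ev

end Braided

theorem IsLocalRing.isUnit_of_smul_eq_self {R M : Type*} [Ring R] [IsLocalRing R]
    [AddCommGroup M] [Module R M] {e : R} {x : M} (hx : x ≠ 0) (h : e • x = x) : IsUnit e := by
  refine (IsLocalRing.isUnit_or_isUnit_of_add_one (add_sub_cancel e 1)).resolve_right
    fun hu => hx ?_
  rw [← hu.smul_eq_zero, sub_smul, one_smul, h, sub_self]

theorem AddSubgroup.map_mem_of_mem_closure {A B : Type*} [AddGroup A] [AddGroup B] (F : A →+ B)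
    {s : Set A} {T : AddSubgroup B} (hs : ∀ a ∈ s, F a ∈ T) {x : A}
    (hx : x ∈ AddSubgroup.closure s) : F x ∈ T :=
  (AddSubgroup.closure_le (T.comap F)).mpr hs hx

section Preadditive

variable {C : Type u} [Category.{v} C] [Preadditive C]

theorem nonempty_iso_of_retract {X Y : C} [IsLocalRing (End X)] (hY : ¬IsZero Y)
    (i : Y ⟶ X) (r : X ⟶ Y) (hir : i ≫ r = 𝟙 Y) : Nonempty (Y ≅ X) := by
  have hi : i ≠ 0 := fun h => hY <| (IsZero.iff_id_eq_zero Y).mpr (by rw [← hir, h, zero_comp])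
  set e : End X := r ≫ i with he
  have hunit : IsUnit e :=
    IsLocalRing.isUnit_of_smul_eq_self hi (by rw [end_smul_def, he, reassoc_of% hir])
  have hidem : IsIdempotentElem e := by
    rw [IsIdempotentElem, End.mul_def, he, Category.assoc, reassoc_of% hir]
  exact ⟨⟨i, r, hir, (IsIdempotentElem.iff_eq_one_of_isUnit hunit).mp hidem⟩⟩

theorem exists_comp_eq_of_isSimpleModule {Z X : C} [IsSimpleModule (End X) (Z ⟶ X)]
    {χ : Z ⟶ X} (hχ : χ ≠ 0) (χ' : Z ⟶ X) : ∃ h : X ⟶ X, χ ≫ h = χ' :=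
  IsSimpleModule.toSpanSingleton_surjective (End X) hχ χ'

end Preadditive

section Submod

variable {C : Type u} [Category.{v} C] [Preadditive C] {Z : C}

instance : OrderBot (Submod Z) where
  bot :=
    { carrier := fun _ => ⊥
      map_mem := fun f φ hφ => by
        rw [AddSubgroup.mem_bot] at hφ ⊢
        rw [hφ, zero_comp] }
  bot_le _ _ := bot_le

instance : OrderTop (Submod Z) where
  top :=
    { carrier := fun _ => ⊤
      map_mem := fun _ _ _ => AddSubgroup.mem_top _ }
  le_top _ _ := le_top

theorem Submod.ne_bot_of_mem {M : Submod Z} {W : C} {φ : Z ⟶ W} (hφ : φ ∈ M.carrier W)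
    (h0 : φ ≠ 0) : M ≠ ⊥ := by
  rintro rfl
  exact h0 ((AddSubgroup.mem_bot).mp hφ)

theorem Submod.eq_top_of_id_mem {M : Submod Z} (h : 𝟙 Z ∈ M.carrier Z) : M = ⊤ :=
  top_unique fun _ φ _ => Category.id_comp φ ▸ M.map_mem φ h

def Submod.cyclic {Y : C} (φ : Z ⟶ Y) : Submod Z where
  carrier W := (Preadditive.leftComp W φ).range
  map_mem := by
    rintro W W' f _ ⟨h, rfl⟩
    exact ⟨h ≫ f, (Category.assoc _ _ _).symm⟩

theorem Submod.mem_cyclic {Y W : C} {φ : Z ⟶ Y} {f : Z ⟶ W} :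
    f ∈ (cyclic φ).carrier W ↔ ∃ h : Y ⟶ W, φ ≫ h = f :=
  Iff.rfl

theorem Submod.mem_cyclic_self {Y : C} (φ : Z ⟶ Y) : φ ∈ (cyclic φ).carrier Y :=
  ⟨𝟙 Y, Category.comp_id φ⟩

theorem Submod.cyclic_le_iff {Y : C} {φ : Z ⟶ Y} {M : Submod Z} :
    cyclic φ ≤ M ↔ φ ∈ M.carrier Y := by
  refine ⟨fun h => h Y (mem_cyclic_self φ), ?_⟩
  rintro hφ W _ ⟨h, rfl⟩
  exact M.map_mem h hφ

theorem Submod.cyclic_ne_bot {Y : C} {φ : Z ⟶ Y} (hφ : φ ≠ 0) : cyclic φ ≠ ⊥ :=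
  ne_bot_of_mem (mem_cyclic_self φ) hφ

theorem Submod.cyclic_ne_top (hZ : ¬IsZero Z) {Y : C} [IsLocalRing (End Y)]
    (hYZ : ¬Nonempty (Y ≅ Z)) (φ : Z ⟶ Y) : cyclic φ ≠ ⊤ := by
  intro h
  obtain ⟨r, hr⟩ : 𝟙 Z ∈ (cyclic φ).carrier Z := h ▸ AddSubgroup.mem_top _
  obtain ⟨e⟩ := nonempty_iso_of_retract hZ φ r hr
  exact hYZ ⟨e.symm⟩

theorem Submod.nonempty_iso_of_cyclic_eq {X Y : C} [IsLocalRing (End X)] [IsLocalRing (End Y)]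
    {φ : Z ⟶ Y} {ψ : Z ⟶ X} (hφ : φ ≠ 0) (h : cyclic φ = cyclic ψ) : Nonempty (Y ≅ X) := by
  obtain ⟨a, ha⟩ := mem_cyclic.mp (show ψ ∈ (cyclic φ).carrier X from h ▸ mem_cyclic_self ψ)
  obtain ⟨b, hb⟩ := mem_cyclic.mp (show φ ∈ (cyclic ψ).carrier Y from h ▸ mem_cyclic_self φ)
  set e : End Y := a ≫ b with he
  obtain ⟨u, hu⟩ : IsUnit e := IsLocalRing.isUnit_of_smul_eq_self hφ (by
    rw [end_smul_def, he, ← Category.assoc, ha, hb])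
  refine nonempty_iso_of_retract (fun hY => hφ (hY.eq_of_tgt _ _)) a (b ≫ u.inv) ?_
  rw [← Category.assoc, ← he, ← hu, ← End.mul_def, u.inv_val, End.one_def]

end Submod

section KrullSchmidt

variable {C : Type u} [Category.{v} C] [Preadditive C] [HasFiniteBiproducts C]

theorem IsKrullSchmidt.exists_sum_eq_id (hKS : IsKrullSchmidt C) (W : C) :
    ∃ (n : ℕ) (f : Fin n → C) (p : ∀ j, W ⟶ f j) (s : ∀ j, f j ⟶ W),
      (∀ j, Indecomposable (f j)) ∧ ∑ j, p j ≫ s j = 𝟙 W := by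
  obtain ⟨n, f, hind, ⟨e⟩⟩ := hKS.decomp W
  refine ⟨n, f, fun j => e.hom ≫ biproduct.π f j, fun j => biproduct.ι f j ≫ e.inv, hind, ?_⟩
  calc ∑ j, (e.hom ≫ biproduct.π f j) ≫ biproduct.ι f j ≫ e.inv
      = e.hom ≫ (∑ j, biproduct.π f j ≫ biproduct.ι f j) ≫ e.inv := by
        simp only [Preadditive.sum_comp, Preadditive.comp_sum, Category.assoc]
    _ = 𝟙 W := by simp

namespace Submod

variable {Z : C}

theorem le_of_forall_indecomposable (hKS : IsKrullSchmidt C) {M N : Submod Z}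
    (h : ∀ V : C, Indecomposable V → M.carrier V ≤ N.carrier V) : M ≤ N := by
  intro W φ hφ
  obtain ⟨n, f, p, s, hind, htot⟩ := hKS.exists_sum_eq_id W
  rw [← Category.comp_id φ, ← htot, Preadditive.comp_sum]
  refine AddSubgroup.sum_mem _ fun j _ => ?_
  rw [← Category.assoc]
  exact N.map_mem _ (h _ (hind j) (M.map_mem _ hφ))

theorem exists_indecomposable_mem_ne_zero (hKS : IsKrullSchmidt C) {M : Submod Z} (hM : M ≠ ⊥) :
    ∃ V : C, Indecomposable V ∧ ∃ φ ∈ M.carrier V, φ ≠ 0 := by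
  by_contra! h
  exact hM <| le_bot_iff.mp <| le_of_forall_indecomposable hKS fun V hV φ hφ =>
    AddSubgroup.mem_bot.mpr (h V hV φ hφ)

end Submod

end KrullSchmidt

section FieldEnd

variable {C : Type u} [Category.{v} C] [Preadditive C] {Z : C}

theorem not_isZero_of_isField_end (hK : IsField (End Z)) : ¬IsZero Z := fun hZ => by
  obtain ⟨x, y, hxy⟩ := hK.exists_pair_ne
  exact hxy (hZ.eq_of_src x y)

theorem Submod.not_iso_of_mem_of_ne_top (hK : IsField (End Z)) {M : Submod Z} (hM : M ≠ ⊤)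
    {V : C} {φ : Z ⟶ V} (hφ : φ ∈ M.carrier V) (h0 : φ ≠ 0) : ¬Nonempty (V ≅ Z) := by
  rintro ⟨e⟩
  set c : End Z := φ ≫ e.hom with hc
  have hc0 : c ≠ 0 := fun h => h0 (by simpa [hc] using h =≫ e.inv)
  obtain ⟨d, hd⟩ := hK.mul_inv_cancel hc0
  refine hM (eq_top_of_id_mem ?_)
  rw [← End.one_def, ← hd, hK.mul_comm, End.mul_def, hc, Category.assoc]
  exact M.map_mem _ hφ

end FieldEnd

namespace Submod

variable {C : Type u} [Category.{v} C] [Preadditive C] [HasFiniteBiproducts C] {Z : C}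

theorem exists_isSimpleModule_of_existsUnique (hKS : IsKrullSchmidt C) (hK : IsField (End Z))
    (h : ∃! M : Submod Z, M ≠ ⊥ ∧ M ≠ ⊤) :
    ∃ X : C, Indecomposable X ∧ ¬Nonempty (X ≅ Z) ∧ IsSimpleModule (End X) (Z ⟶ X) ∧
      ∀ Y : C, Indecomposable Y → ¬Nonempty (Y ≅ Z) → ¬Nonempty (Y ≅ X) →
        ∀ φ : Z ⟶ Y, φ = 0 := by
  obtain ⟨M, ⟨hM0, hMtop⟩, hM⟩ := h
  obtain ⟨X, hX, ψ, hψM, hψ⟩ := exists_indecomposable_mem_ne_zero hKS hM0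
  have hXZ := not_iso_of_mem_of_ne_top hK hMtop hψM hψ
  have hcyc : ∀ Y : C, Indecomposable Y → ¬Nonempty (Y ≅ Z) →
      ∀ φ : Z ⟶ Y, φ ≠ 0 → cyclic φ = M := by
    intro Y hY hYZ φ hφ
    have := hKS.local_end Y hY
    exact hM _ ⟨cyclic_ne_bot hφ, cyclic_ne_top (not_isZero_of_isField_end hK) hYZ φ⟩
  have := hKS.local_end X hX
  refine ⟨X, hX, hXZ, ?_, fun Y hY hYZ hYX φ => ?_⟩
  · refine isSimpleModule_iff_toSpanSingleton_surjective.mpr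
      ⟨⟨ψ, 0, hψ⟩, fun χ hχ χ' => ?_⟩
    change χ' ∈ (cyclic χ).carrier X
    rw [hcyc X hX hXZ χ hχ]
    by_cases hχ' : χ' = 0
    · exact hχ' ▸ zero_mem _
    · exact hcyc X hX hXZ χ' hχ' ▸ mem_cyclic_self χ'
  · by_contra hφ
    have := hKS.local_end Y hY
    exact hYX (nonempty_iso_of_cyclic_eq hφ
      ((hcyc Y hY hYZ φ hφ).trans (hcyc X hX hXZ ψ hψ).symm))

theorem existsUnique_of_isSimpleModule (hKS : IsKrullSchmidt C) (hK : IsField (End Z))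
    {X : C} (hX : Indecomposable X) (hXZ : ¬Nonempty (X ≅ Z)) [IsSimpleModule (End X) (Z ⟶ X)]
    (hvan : ∀ Y : C, Indecomposable Y → ¬Nonempty (Y ≅ Z) → ¬Nonempty (Y ≅ X) →
      ∀ φ : Z ⟶ Y, φ = 0) :
    ∃! M : Submod Z, M ≠ ⊥ ∧ M ≠ ⊤ := by
  have := hKS.local_end X hX
  have := IsSimpleModule.nontrivial (End X) (Z ⟶ X)
  obtain ⟨ψ, hψ⟩ := exists_ne (0 : Z ⟶ X)
  have hiso {M : Submod Z} (hM : M ≠ ⊤) {V : C} (hV : Indecomposable V) {φ : Z ⟶ V}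
      (hφ : φ ∈ M.carrier V) (h0 : φ ≠ 0) : Nonempty (V ≅ X) := by
    by_contra hVX
    exact h0 (hvan V hV (not_iso_of_mem_of_ne_top hK hM hφ h0) hVX φ)
  refine ⟨cyclic ψ, ⟨cyclic_ne_bot hψ, cyclic_ne_top (not_isZero_of_isField_end hK) hXZ ψ⟩, ?_⟩
  rintro M ⟨hM0, hMtop⟩
  apply le_antisymm
  · refine le_of_forall_indecomposable hKS fun V hV φ hφ => ?_
    by_cases h0 : φ = 0
    · exact h0 ▸ zero_mem _
    obtain ⟨e⟩ := hiso hMtop hV hφ h0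
    obtain ⟨h, hh⟩ := exists_comp_eq_of_isSimpleModule hψ (φ ≫ e.hom)
    exact mem_cyclic.mpr ⟨h ≫ e.inv, by rw [← Category.assoc, hh]; simp⟩
  · obtain ⟨V, hV, χ, hχM, hχ⟩ := exists_indecomposable_mem_ne_zero hKS hM0
    obtain ⟨e⟩ := hiso hMtop hV hχM hχ
    obtain ⟨h, hh⟩ := exists_comp_eq_of_isSimpleModule (χ := χ ≫ e.hom) (by simpa using hχ) ψ
    exact cyclic_le_iff.mpr (hh ▸ M.map_mem h (M.map_mem e.hom hχM))

end Submod

section TensorIdeal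

variable {C : Type u} [Category.{v} C] [MonoidalCategory C]

theorem unit_comp_rightUnitor_inv_whiskerLeft {Z U : C} (k : 𝟙_ C ⟶ Z) (φ : 𝟙_ C ⟶ U) :
    k ≫ (ρ_ Z).inv ≫ (Z ◁ φ) = φ ≫ (λ_ U).inv ≫ (k ▷ U) := by
  rw [rightUnitor_inv_naturality_assoc, ← whisker_exchange, ← unitors_inv_equal,
    ← leftUnitor_inv_naturality_assoc]

theorem iota_iotaInv {X : C} (D : RightDual X) {Y : C} (f : X ⟶ Y) :
    iota D (iotaInv D f) = f := by
  dsimp only [iota, iotaRaw, iotaInv]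
  rw [MonoidalCategory.whiskerLeft_comp]
  simp only [Category.assoc]
  slice_lhs 3 4 => rw [associator_inv_naturality_right]
  slice_lhs 4 5 => rw [whisker_exchange]
  slice_lhs 5 6 => rw [leftUnitor_naturality]
  slice_lhs 1 5 => rw [D.zigzag₁]
  simp

variable [Preadditive C]

theorem TensorIdeal.mem_iff_iotaInv_mem (J : TensorIdeal C) {X Y : C} (D : RightDual X)
    (f : X ⟶ Y) : f ∈ J.carrier X Y ↔ iotaInv D f ∈ J.carrier (𝟙_ C) (D.dual ⊗ Y) := by
  refine ⟨fun hf => J.comp_pre D.coev (J.whisker_mem D.dual hf), fun hf => ?_⟩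
  rw [← iota_iotaInv D f]
  exact J.comp_pre _ (J.comp_post _ (J.whisker_mem X hf))

theorem Psi_injective (hrigid : ∀ X : C, Nonempty (RightDual X)) :
    Function.Injective (Psi (C := C)) := by
  intro J K h
  refine TensorIdeal.ext' (funext fun X => funext fun Y => AddSubgroup.ext fun f => ?_)
  obtain ⟨D⟩ := hrigid X
  rw [J.mem_iff_iotaInv_mem D, K.mem_iff_iotaInv_mem D]
  exact SetLike.ext_iff.mp (congrArg (fun M : Submod (𝟙_ C) => M.carrier (D.dual ⊗ Y)) h) _

theorem Psi_top : Psi (TensorIdeal.top C) = ⊤ :=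
  Submod.ext' rfl

variable [MonoidalPreadditive C]

theorem Psi_bot : Psi (TensorIdeal.bot C) = ⊥ :=
  Submod.ext' rfl

-- `g` lands in `Z ⊗ 𝟙` rather than in `Z` so that whiskering the generators costs only an
-- associator.
def genIdeal (M : Submod (𝟙_ C)) : TensorIdeal C where
  carrier X Y := AddSubgroup.closure {f | ∃ (Z U : C), ∃ φ ∈ M.carrier U,
    ∃ (g : X ⟶ Z ⊗ 𝟙_ C) (h : Z ⊗ U ⟶ Y), f = g ≫ (Z ◁ φ) ≫ h}
  comp_pre := by
    intro W X Y g f hf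
    refine AddSubgroup.map_mem_of_mem_closure (Preadditive.leftComp Y g) ?_ hf
    rintro _ ⟨Z, U, φ, hφ, g', h, rfl⟩
    exact AddSubgroup.subset_closure ⟨Z, U, φ, hφ, g ≫ g', h, by simp [Preadditive.leftComp]⟩
  comp_post := by
    intro X Y Y' f h hf
    refine AddSubgroup.map_mem_of_mem_closure (Preadditive.rightComp X h) ?_ hf
    rintro _ ⟨Z, U, φ, hφ, g, h', rfl⟩
    exact AddSubgroup.subset_closure ⟨Z, U, φ, hφ, g, h' ≫ h, by simp [Preadditive.rightComp]⟩
  whisker_mem := by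
    intro W X Y f hf
    refine AddSubgroup.map_mem_of_mem_closure (tensorLeft W).mapAddHom ?_ hf
    rintro _ ⟨Z, U, φ, hφ, g, h, rfl⟩
    exact AddSubgroup.subset_closure ⟨W ⊗ Z, U, φ, hφ, (W ◁ g) ≫ (α_ W Z (𝟙_ C)).inv,
      (α_ W Z U).hom ≫ (W ◁ h), by simp [Functor.mapAddHom]⟩

theorem Psi_genIdeal (M : Submod (𝟙_ C)) : Psi (genIdeal M) = M := by
  refine le_antisymm (fun Y => (AddSubgroup.closure_le _).mpr ?_)
    fun Y φ hφ => AddSubgroup.subset_closure ⟨𝟙_ C, Y, φ, hφ, (λ_ (𝟙_ C)).inv, (λ_ Y).hom, ?_⟩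
  · rintro _ ⟨Z, U, φ, hφ, g, h, rfl⟩
    have := unit_comp_rightUnitor_inv_whiskerLeft (g ≫ (ρ_ Z).hom) φ
    simp only [Category.assoc, Iso.hom_inv_id_assoc] at this
    rw [reassoc_of% this]
    exact M.map_mem _ hφ
  · rw [leftUnitor_naturality]
    simp

def psiEquiv (hrigid : ∀ X : C, Nonempty (RightDual X)) : TensorIdeal C ≃ Submod (𝟙_ C) where
  toFun := Psi
  invFun := genIdeal
  left_inv J := Psi_injective hrigid (Psi_genIdeal (Psi J))
  right_inv := Psi_genIdeal

theorem existsUnique_tensorIdeal_iff (hrigid : ∀ X : C, Nonempty (RightDual X)) :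
    (∃! J : TensorIdeal C, J ≠ TensorIdeal.bot C ∧ J ≠ TensorIdeal.top C) ↔
      ∃! M : Submod (𝟙_ C), M ≠ ⊥ ∧ M ≠ ⊤ :=
  (psiEquiv hrigid).existsUnique_congr fun J => by
    rw [← Psi_bot, ← Psi_top]
    exact and_congr (Psi_injective hrigid).ne_iff.symm (Psi_injective hrigid).ne_iff.symm

end TensorIdeal

section Statement

variable (C : Type u) [Category.{v} C] [Preadditive C] [MonoidalCategory C]
  [MonoidalPreadditive C] [HasFiniteBiproducts C]

/-- **Corollary.** Let `C` be right rigid, Krull-Schmidt, with `C(𝟙,𝟙)` a field.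
The following are equivalent:
(i) `C` has precisely one tensor ideal other than the zero ideal and all of `C`;
(ii) there is an indecomposable `X ≇ 𝟙` such that `C(𝟙,X)` is a (nonzero) simple left
`C(X,X)`-module and `C(𝟙,Y) = 0` for every indecomposable `Y` not isomorphic to `𝟙` or `X`. -/
theorem unique_proper_tensorIdeal_iff
    (hrigid : ∀ X : C, Nonempty (RightDual X)) (hKS : IsKrullSchmidt C)
    (hK : IsField (End (𝟙_ C))) :
    (∃! J : TensorIdeal C, J ≠ TensorIdeal.bot C ∧ J ≠ TensorIdeal.top C) ↔
      (∃ X : C, Indecomposable X ∧ ¬ Nonempty (X ≅ 𝟙_ C) ∧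
        IsSimpleModule (End X) (𝟙_ C ⟶ X) ∧
        ∀ Y : C, Indecomposable Y → ¬ Nonempty (Y ≅ 𝟙_ C) → ¬ Nonempty (Y ≅ X) →
          ∀ φ : 𝟙_ C ⟶ Y, φ = 0) := by
  rw [existsUnique_tensorIdeal_iff hrigid]
  refine ⟨Submod.exists_isSimpleModule_of_existsUnique hKS hK, ?_⟩
  rintro ⟨X, hX, hX1, hsimple, hvan⟩
  exact Submod.existsUnique_of_isSimpleModule hKS hK hX hX1 hvan

end Statement

end TIP
end

section
/- Let C be a Krull–Schmidt preadditive category, let Z and W be indecomposable objects, and let f ∈ C(Z,W) be nonzero. Let M be the subfunctor of P_Z = C(Z,−) generated by f. Then M ≠ Tr_S P_Z for every subset S of inde C not containing (the class of) W. -/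
/-!
If `M = Tr_S P_Z`, then `f ∈ M(W)` is a sum of maps factoring through objects of `S`, and each
such map `Z ⟶ X` lies in `M(X)`, hence is of the form `f ≫ c`. So `f = f ≫ g` with `g ∈ End W`
a sum of maps factoring through objects of `S`. None of these summands is invertible, since
otherwise `W` would be a direct summand of some indecomposable `X ∈ S` with local endomorphism
ring, forcing `X ≅ W`. As `End W` is local, `g` is then a nonunit, `1 - g` is a unit, and
`f ≫ (1 - g) = 0` gives `f = 0`.
-/

open CategoryTheory CategoryTheory.Limits CategoryTheory.MonoidalCategory

namespace TIP

attribute [local instance] CategoryTheory.Limits.hasBinaryBiproducts_of_finite_biproducts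

universe v u v₂ u₂

section LocalEnd

variable {C : Type u} [Category.{v} C] [Preadditive C]

theorem eq_zero_of_comp_isUnit {Z W : C} {f : Z ⟶ W} {u : End W} (hu : IsUnit u)
    (h : f ≫ u = 0) : f = 0 :=
  hu.smul_eq_zero.mp h

theorem eq_zero_of_eq_comp_of_not_isUnit {Z W : C} [IsLocalRing (End W)] {f : Z ⟶ W}
    {g : End W} (hg : ¬IsUnit g) (h : f ≫ g = f) : f = 0 := by
  have hunit : IsUnit (1 - g) :=
    (IsLocalRing.isUnit_or_isUnit_of_add_one (add_sub_cancel g 1)).resolve_left hg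
  refine eq_zero_of_comp_isUnit hunit ?_
  rw [Preadditive.comp_sub, h, End.one_def, Category.comp_id, sub_self]

theorem nonempty_iso_of_isDirectSummand {W X : C} [IsLocalRing (End X)] (hW : ¬IsZero W)
    (h : IsDirectSummand W X) : Nonempty (X ≅ W) := by
  obtain ⟨i, r, hir⟩ := h
  let e : End X := r ≫ i
  rcases IsLocalRing.isUnit_or_isUnit_of_add_one (add_sub_cancel e 1) with hunit | hunit
  · have : IsIso (r ≫ i) := (isUnit_iff_isIso e).mp hunit
    have : Epi i := epi_of_epi r i
    have : IsSplitMono i := IsSplitMono.mk' ⟨r, hir⟩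
    have : IsIso i := isIso_of_epi_of_isSplitMono i
    exact ⟨(asIso i).symm⟩
  · have hi : i = 0 := eq_zero_of_comp_isUnit hunit (by
      rw [Preadditive.comp_sub, End.one_def, Category.comp_id, ← Category.assoc, hir,
        Category.id_comp, sub_self])
    exact absurd ((IsZero.iff_id_eq_zero W).mpr (by rw [← hir, hi, zero_comp])) hW

theorem not_isIso_comp_of_not_nonempty_iso {W X : C} [IsLocalRing (End X)] (hW : ¬IsZero W)
    (hXW : ¬Nonempty (X ≅ W)) (c : W ⟶ X) (a : X ⟶ W) : ¬IsIso (c ≫ a) := fun _ =>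
  hXW (nonempty_iso_of_isDirectSummand hW
    ⟨c, a ≫ inv (c ≫ a), by rw [← Category.assoc, IsIso.hom_inv_id]⟩)

theorem mem_traceSub_of_mem {Z X : C} {S : Set C} (hX : X ∈ S) (b : Z ⟶ X) :
    b ∈ (traceSub Z S).carrier X :=
  AddSubgroup.subset_closure ⟨X, hX, b, 𝟙 X, (Category.comp_id b).symm⟩

theorem traceSub_carrier_le_map_leftComp {Z W : C} (f : Z ⟶ W) {S : Set C}
    (hfS : ∀ X ∈ S, ∀ b : Z ⟶ X, ∃ c : W ⟶ X, b = f ≫ c) (Y : C) :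
    (traceSub Z S).carrier Y ≤ ((traceSub W S).carrier Y).map (Preadditive.leftComp Y f) := by
  refine AddSubgroup.closure_le _ |>.mpr ?_
  rintro _ ⟨X, hX, b, a, rfl⟩
  obtain ⟨c, rfl⟩ := hfS X hX b
  exact ⟨c ≫ a, AddSubgroup.subset_closure ⟨X, hX, c, a, rfl⟩, (Category.assoc f c a).symm⟩

theorem not_isUnit_of_mem_traceSub {W : C} [IsLocalRing (End W)] (hW : ¬IsZero W)
    {S : Set C} (hS : ∀ X ∈ S, IsLocalRing (End X)) (hSW : ∀ X ∈ S, ¬Nonempty (X ≅ W))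
    {g : End W} (hg : g ∈ (traceSub W S).carrier W) : ¬IsUnit g := by
  induction hg using AddSubgroup.closure_induction with
  | mem _ hmem =>
    obtain ⟨X, hX, c, a, rfl⟩ := hmem
    have := hS X hX
    rw [isUnit_iff_isIso]
    exact not_isIso_comp_of_not_nonempty_iso hW (hSW X hX) c a
  | zero => exact not_isUnit_zero
  | add _ _ _ _ hg₁ hg₂ => exact IsLocalRing.nonunits_add hg₁ hg₂
  | neg _ _ hg => rwa [IsUnit.neg_iff]

end LocalEnd

section Statement

variable (C : Type u) [Category.{v} C] [Preadditive C] [HasFiniteBiproducts C]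

theorem generated_ne_trace (hKS : IsKrullSchmidt C) {Z W : C}
    (hW : Indecomposable W)
    (f : Z ⟶ W) (hf : f ≠ 0) (M : Submod Z)
    (hM : ∀ Y : C, (M.carrier Y : Set (Z ⟶ Y)) = {h : Z ⟶ Y | ∃ g : W ⟶ Y, h = f ≫ g})
    (S : Set C) (hS : ∀ X ∈ S, Indecomposable X) (hSW : ∀ X ∈ S, ¬ Nonempty (X ≅ W)) :
    M ≠ traceSub Z S := by
  intro heq
  have := hKS.local_end W hW
  have hmem : ∀ (Y : C) (h : Z ⟶ Y), h ∈ M.carrier Y ↔ ∃ g : W ⟶ Y, h = f ≫ g :=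
    fun Y h => Set.ext_iff.mp (hM Y) h
  have hfactor : ∀ X ∈ S, ∀ b : Z ⟶ X, ∃ c : W ⟶ X, b = f ≫ c := fun X hX b =>
    (hmem X b).mp (heq ▸ mem_traceSub_of_mem hX b)
  have hfT : f ∈ (traceSub Z S).carrier W :=
    heq ▸ (hmem W f).mpr ⟨𝟙 W, (Category.comp_id f).symm⟩
  obtain ⟨g, hg, hfg⟩ := traceSub_carrier_le_map_leftComp f hfactor W hfT
  exact hf (eq_zero_of_eq_comp_of_not_isUnit
    (not_isUnit_of_mem_traceSub hW.1 (fun X hX => hKS.local_end X (hS X hX)) hSW hg) hfg)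

end Statement

end TIP
end

section
/- Let C be a right rigid Krull–Schmidt monoidal category, and let 𝓑 = { X ∈ inde C | C(𝟙,X) ≠ 0 }. Assume there exists X ∈ 𝓑 such that C(𝟙,X) is not a simple left C(X,X)-module. Then P_𝟙 has subfunctors which are not trace submodules, and consequently the decategorification map Ob : TId(C) → Id([C]_⊕) is not an isomorphism. -/
/-!
As `C(𝟙,X)` is not simple, some `φ : 𝟙 ⟶ X`, `φ ≠ 0`, does not generate it: not every
morphism `𝟙 ⟶ X` factors through `φ`. Let `M` be the subfunctor of `P_𝟙` generated by `φ`.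
If `M = Tr_S P_𝟙`, then, `End X` being local, either some composite `X ⟶ W ⟶ X` with
`W ∈ S` is invertible, and then every `𝟙 ⟶ X` lies in `Tr_S P_𝟙`, or all of them lie in the
radical of `End X`, and then `φ = φ ≫ s` with `s` in the radical, forcing `φ = 0`.

For `Ob`: every subfunctor `M` of `P_𝟙` is the `𝟙`-component of the largest tensor ideal
`Phi M` with `𝟙`-component inside `M`. If `Ob` reflected the order, `Phi M` would coincide
with the ideal of morphisms factoring through objects of `Ob (Phi M)`, whose `𝟙`-component
is a trace submodule.
-/

open CategoryTheory CategoryTheory.Limits CategoryTheory.MonoidalCategory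

namespace TIP

attribute [local instance] CategoryTheory.Limits.hasBinaryBiproducts_of_finite_biproducts

universe v u v₂ u₂

theorem AddSubgroup.apply_mem_closure_of_mapsTo {G H : Type*} [AddGroup G] [AddGroup H]
    (f : G →+ H) {s : Set G} {t : Set H} (h : Set.MapsTo f s t) {x : G}
    (hx : x ∈ AddSubgroup.closure s) : f x ∈ AddSubgroup.closure t :=
  (AddSubgroup.closure_le ((AddSubgroup.closure t).comap f)).mpr
    (fun _ hy => AddSubgroup.subset_closure (h hy)) hx

def IsLocalRing.nonunitsAddSubgroup (R : Type*) [Ring R] [IsLocalRing R] : AddSubgroup R where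
  __ := IsLocalRing.nonunitsAddSubmonoid R
  neg_mem' hx hu := hx (by simpa using hu.neg)

section Principal

variable {C : Type u} [Category.{v} C] [Preadditive C]

def Submod.principal {Z X : C} (φ : Z ⟶ X) : Submod Z where
  carrier Y := (Preadditive.leftComp Y φ).range
  map_mem := by
    rintro Y Y' f _ ⟨a, rfl⟩
    exact ⟨a ≫ f, (Category.assoc _ _ _).symm⟩

theorem comp_mem_traceSub {Z W Y : C} {S : Set C} (hW : W ∈ S) (b : Z ⟶ W) (a : W ⟶ Y) :
    b ≫ a ∈ (traceSub Z S).carrier Y :=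
  AddSubgroup.subset_closure ⟨W, hW, b, a, rfl⟩

theorem traceSub_eq_top_of_isIso {Z X W : C} {S : Set C} (hW : W ∈ S) (u : X ⟶ W)
    (v : W ⟶ X) [IsIso (u ≫ v)] : (traceSub Z S).carrier X = ⊤ :=
  eq_top_iff.mpr fun ψ _ => by
    simpa [← Category.assoc u v] using comp_mem_traceSub hW (ψ ≫ u) (v ≫ inv (u ≫ v))

theorem traceSub_le_map_nonunits {Z X : C} [IsLocalRing (End X)] {φ : Z ⟶ X} {S : Set C}
    (hle : traceSub Z S ≤ Submod.principal φ)
    (hS : ∀ W ∈ S, ∀ (u : X ⟶ W) (v : W ⟶ X), ¬ IsIso (u ≫ v)) :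
    (traceSub Z S).carrier X ≤
      (IsLocalRing.nonunitsAddSubgroup (End X)).map (Preadditive.leftComp X φ) := by
  refine (AddSubgroup.closure_le _).mpr ?_
  rintro _ ⟨W, hW, b, a, rfl⟩
  obtain ⟨c, rfl⟩ := hle W (by simpa using comp_mem_traceSub hW b (𝟙 W))
  exact ⟨c ≫ a, mt (isUnit_iff_isIso _).mp (hS W hW c a), (Category.assoc φ c a).symm⟩

theorem eq_zero_of_mem_map_nonunits {Z X : C} [IsLocalRing (End X)] {φ : Z ⟶ X}
    (h : φ ∈ (IsLocalRing.nonunitsAddSubgroup (End X)).map (Preadditive.leftComp X φ)) :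
    φ = 0 := by
  obtain ⟨(s : End X), hs, hφs : φ ≫ s = φ⟩ := h
  have : IsIso ((1 : End X) - s) := (isUnit_iff_isIso (1 - s)).mp
    ((IsLocalRing.isUnit_or_isUnit_of_add_one (add_sub_cancel s 1)).resolve_left hs)
  refine (cancel_mono ((1 : End X) - s)).mp ?_
  rw [Preadditive.comp_sub, End.one_def, Category.comp_id, hφs, sub_self, zero_comp]

theorem principal_ne_traceSub {Z X : C} [IsLocalRing (End X)] {φ : Z ⟶ X} (hφ : φ ≠ 0)
    (hsurj : ¬ Function.Surjective (Preadditive.leftComp X φ)) (S : Set C) :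
    Submod.principal φ ≠ traceSub Z S := by
  intro hM
  by_cases hS : ∃ W ∈ S, ∃ (u : X ⟶ W) (v : W ⟶ X), IsIso (u ≫ v)
  · obtain ⟨W, hW, u, v, huv⟩ := hS
    refine hsurj fun ψ => ?_
    have hψ : ψ ∈ (traceSub Z S).carrier X :=
      traceSub_eq_top_of_isIso hW u v ▸ AddSubgroup.mem_top ψ
    exact (hM ▸ hψ : ψ ∈ (Submod.principal φ).carrier X)
  · push Not at hS
    refine hφ (eq_zero_of_mem_map_nonunits (traceSub_le_map_nonunits hM.symm.le hS ?_))
    exact hM ▸ (⟨𝟙 X, Category.comp_id φ⟩ : φ ∈ (Submod.principal φ).carrier X)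

end Principal

section TensorIdeals

theorem unit_comp_rightUnitor_inv_whiskerLeft_s10 {C : Type u} [Category.{v} C] [MonoidalCategory C]
    {Z Y : C} (g : 𝟙_ C ⟶ Z) (f : 𝟙_ C ⟶ Y) :
    g ≫ (ρ_ Z).inv ≫ Z ◁ f = f ≫ (λ_ Y).inv ≫ g ▷ Y := by
  rw [rightUnitor_inv_naturality_assoc, ← whisker_exchange, leftUnitor_inv_naturality_assoc,
    unitors_inv_equal]

variable {C : Type u} [Category.{v} C] [Preadditive C] [MonoidalCategory C]
  [MonoidalPreadditive C]

/-- The largest tensor ideal `J` with `Psi J ≤ M`. -/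
def Phi (M : Submod (𝟙_ C)) : TensorIdeal C where
  carrier A B :=
    { carrier := {f | ∀ (Z : C) (b : 𝟙_ C ⟶ Z ⊗ A), b ≫ Z ◁ f ∈ M.carrier (Z ⊗ B)}
      add_mem' := fun hf hg Z b => by simpa using add_mem (hf Z b) (hg Z b)
      zero_mem' := fun Z b => by simp
      neg_mem' := fun {f} hf Z b => by
        have h : Z ◁ (-f) = -(Z ◁ f) := (tensorLeft Z).map_neg
        simpa [h] using hf Z b }
  comp_pre := by
    intro _ _ _ g _ hf Z b
    simpa using hf Z (b ≫ Z ◁ g)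
  comp_post := by
    intro _ _ _ _ h hf Z b
    simpa using M.map_mem (Z ◁ h) (hf Z b)
  whisker_mem := by
    intro U _ _ _ hf Z b
    simpa using M.map_mem (α_ Z U _).hom (hf (Z ⊗ U) (b ≫ (α_ Z U _).inv))

theorem Psi_Phi (M : Submod (𝟙_ C)) : Psi (Phi M) = M := by
  refine Submod.ext' (funext fun Y => AddSubgroup.ext fun f => ⟨fun hf => ?_, fun hf Z b => ?_⟩)
  · simpa using M.map_mem (λ_ Y).hom (hf (𝟙_ C) (λ_ (𝟙_ C)).inv)
  · have h := unit_comp_rightUnitor_inv_whiskerLeft_s10 (b ≫ (ρ_ Z).hom) f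
    simp only [Category.assoc, Iso.hom_inv_id_assoc] at h
    exact h ▸ M.map_mem _ hf

def TensorIdeal.throughObjects (S : Set C) (hS : ∀ (Z W : C), W ∈ S → Z ⊗ W ∈ S) :
    TensorIdeal C where
  carrier A B := AddSubgroup.closure {h | ∃ W ∈ S, ∃ (b : A ⟶ W) (a : W ⟶ B), h = b ≫ a}
  comp_pre g _ := AddSubgroup.apply_mem_closure_of_mapsTo (Preadditive.leftComp _ g)
    (by rintro _ ⟨W, hW, b, a, rfl⟩; exact ⟨W, hW, g ≫ b, a, (Category.assoc _ _ _).symm⟩)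
  comp_post h := AddSubgroup.apply_mem_closure_of_mapsTo (Preadditive.rightComp _ h)
    (by rintro _ ⟨W, hW, b, a, rfl⟩; exact ⟨W, hW, b, a ≫ h, Category.assoc _ _ _⟩)
  whisker_mem Z _ _ _ := AddSubgroup.apply_mem_closure_of_mapsTo (tensorLeft Z).mapAddHom
    (by
      rintro _ ⟨W, hW, b, a, rfl⟩
      exact ⟨Z ⊗ W, hS Z W hW, Z ◁ b, Z ◁ a, whiskerLeft_comp Z b a⟩)

theorem Psi_throughObjects (S : Set C) (hS : ∀ (Z W : C), W ∈ S → Z ⊗ W ∈ S) :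
    Psi (TensorIdeal.throughObjects S hS) = traceSub (𝟙_ C) S :=
  rfl

variable [HasBinaryBiproducts C]

theorem TensorIdeal.throughObjects_le {S : Set C} {hS : ∀ (Z W : C), W ∈ S → Z ⊗ W ∈ S}
    {J : TensorIdeal C} (h : S ⊆ (obIdeal J).carrier) : throughObjects S hS ≤ J := by
  intro A B
  refine (AddSubgroup.closure_le _).mpr ?_
  rintro _ ⟨W, hW, b, a, rfl⟩
  exact J.comp_pre b (by simpa using J.comp_post a (h hW))

theorem TensorIdeal.subset_obIdeal_throughObjects (S : Set C)
    (hS : ∀ (Z W : C), W ∈ S → Z ⊗ W ∈ S) : S ⊆ (obIdeal (throughObjects S hS)).carrier :=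
  fun W hW => AddSubgroup.subset_closure ⟨W, hW, 𝟙 W, 𝟙 W, (Category.comp_id _).symm⟩

theorem eq_traceSub_of_obIdeal_reflects_le
    (hreflect : ∀ J K : TensorIdeal C, obIdeal J ≤ obIdeal K → J ≤ K) (M : Submod (𝟙_ C)) :
    M = traceSub (𝟙_ C) (obIdeal (Phi M)).carrier := by
  let I := obIdeal (Phi M)
  have hPhi : Phi M = TensorIdeal.throughObjects I.carrier fun Z _ hW => I.tensor_mem Z hW :=
    le_antisymm (hreflect _ _ (TensorIdeal.subset_obIdeal_throughObjects _ _))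
      (TensorIdeal.throughObjects_le le_rfl)
  rw [← Psi_throughObjects _ fun Z _ hW => I.tensor_mem Z hW, ← hPhi, Psi_Phi]

end TensorIdeals

section Statement

variable (C : Type u) [Category.{v} C] [Preadditive C] [MonoidalCategory C]
  [MonoidalPreadditive C] [HasFiniteBiproducts C]

theorem not_simple_implies_Ob_not_iso
    (hKS : IsKrullSchmidt C)
    (X : C) (hXind : Indecomposable X) (hXB : ∃ φ : 𝟙_ C ⟶ X, φ ≠ 0)
    (hnotsimple : ¬ IsSimpleModule (End X) (𝟙_ C ⟶ X)) :
    (∃ M : Submod (𝟙_ C), ∀ S : Set C, M ≠ traceSub (𝟙_ C) S) ∧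
    ¬ (Function.Bijective (obIdeal (C := C)) ∧
        ∀ J K : TensorIdeal C, J ≤ K ↔ obIdeal J ≤ obIdeal K) := by
  have := hKS.local_end X hXind
  obtain ⟨φ, hφ, hsurj⟩ :
      ∃ φ : 𝟙_ C ⟶ X, φ ≠ 0 ∧ ¬ Function.Surjective (Preadditive.leftComp X φ) := by
    obtain ⟨φ, hφ⟩ := hXB
    rw [isSimpleModule_iff_toSpanSingleton_surjective, not_and, not_forall] at hnotsimple
    obtain ⟨ψ, hψ⟩ := hnotsimple ⟨⟨φ, 0, hφ⟩⟩
    exact ⟨ψ, Classical.not_imp.mp hψ⟩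
  have hM := principal_ne_traceSub hφ hsurj
  exact ⟨⟨_, hM⟩, fun ⟨_, hord⟩ =>
    hM _ (eq_traceSub_of_obIdeal_reflects_le (fun J K => (hord J K).mpr) _)⟩

end Statement

end TIP
end

section
/- Let C be a right rigid Krull–Schmidt monoidal category and 𝓑 = { X ∈ inde C | C(𝟙,X) ≠ 0 }. If the left C(X,X)-module C(𝟙,X) is simple for every X ∈ 𝓑, then every subfunctor of P_𝟙 = C(𝟙,−) is a trace submodule. -/
open CategoryTheory CategoryTheory.Limits CategoryTheory.MonoidalCategory

namespace TIP

attribute [local instance] CategoryTheory.Limits.hasBinaryBiproducts_of_finite_biproducts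

universe v u v₂ u₂

/-!
Split `φ ∈ M(Y)` along a Krull–Schmidt decomposition `Y ≅ ⨁ Xᵢ`: each component
`𝟙 ⟶ Xᵢ` lies in `M(Xᵢ)`, so `M` is contained in the trace of the indecomposables `X` with
`M(X) ≠ 0`. Conversely, for such an `X`, `M(X)` is a nonzero `End X`-submodule of the simple
module `C(𝟙, X)`, hence all of it, so that trace is contained in `M`.
-/

section Trace

variable {C : Type u} [Category.{v} C] [Preadditive C]

def Submod.toSubmodule {Z : C} (M : Submod Z) (X : C) : Submodule (End X) (Z ⟶ X) where
  carrier := M.carrier X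
  add_mem' := (M.carrier X).add_mem
  zero_mem' := (M.carrier X).zero_mem
  smul_mem' e _ h := M.map_mem e h

theorem Submod.mem_of_ne_zero_of_isSimpleModule {Z X : C} [IsSimpleModule (End X) (Z ⟶ X)]
    (M : Submod Z) {ψ : Z ⟶ X} (hψ : ψ ∈ M.carrier X) (hψ0 : ψ ≠ 0) (φ : Z ⟶ X) :
    φ ∈ M.carrier X := by
  rcases eq_bot_or_eq_top (M.toSubmodule X) with hbot | htop
  · exact absurd ((Submodule.eq_bot_iff _).1 hbot ψ hψ) hψ0
  · exact (Submodule.eq_top_iff'.1 htop) φ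

theorem traceSub_le {Z : C} {S : Set C} {M : Submod Z}
    (h : ∀ W ∈ S, ∀ b : Z ⟶ W, b ∈ M.carrier W) : traceSub Z S ≤ M := fun Y =>
  (AddSubgroup.closure_le _).2 <| by
    rintro _ ⟨W, hW, b, a, rfl⟩
    exact M.map_mem a (h W hW b)

theorem eq_sum_comp_iso_biproduct {J : Type} [Fintype J] {f : J → C} [HasBiproduct f]
    {Z Y : C} (e : Y ≅ ⨁ f) (φ : Z ⟶ Y) :
    φ = ∑ j, (φ ≫ e.hom ≫ biproduct.π f j) ≫ biproduct.ι f j ≫ e.inv := by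
  calc φ = φ ≫ e.hom ≫ 𝟙 (⨁ f) ≫ e.inv := by simp
    _ = _ := by
      rw [← biproduct.total, Preadditive.sum_comp, Preadditive.comp_sum, Preadditive.comp_sum]
      simp only [Category.assoc]

theorem mem_traceSub_of_iso_biproduct {J : Type} [Fintype J] {f : J → C} [HasBiproduct f]
    {P : C → Prop} (hP : ∀ j, P (f j)) {Z Y : C} (M : Submod Z) (e : Y ≅ ⨁ f)
    {φ : Z ⟶ Y} (hφ : φ ∈ M.carrier Y) :
    φ ∈ (traceSub Z {W | P W ∧ ∃ ψ ∈ M.carrier W, ψ ≠ 0}).carrier Y := by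
  rw [eq_sum_comp_iso_biproduct e φ]
  refine AddSubgroup.sum_mem _ fun j _ => ?_
  by_cases hz : φ ≫ e.hom ≫ biproduct.π f j = 0
  · rw [hz, zero_comp]
    exact AddSubgroup.zero_mem _
  · exact AddSubgroup.subset_closure ⟨f j, ⟨hP j, _, M.map_mem _ hφ, hz⟩, _, _, rfl⟩

end Trace

section Statement

variable (C : Type u) [Category.{v} C] [Preadditive C] [MonoidalCategory C]
  [MonoidalPreadditive C] [HasFiniteBiproducts C]

theorem all_subfunctors_are_trace
    (hKS : IsKrullSchmidt C)
    (hsimple : ∀ X : C, Indecomposable X → (∃ φ : 𝟙_ C ⟶ X, φ ≠ 0) →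
      IsSimpleModule (End X) (𝟙_ C ⟶ X)) :
    ∀ M : Submod (𝟙_ C), ∃ S : Set C, M = traceSub (𝟙_ C) S := by
  intro M
  refine ⟨{W | Indecomposable W ∧ ∃ ψ ∈ M.carrier W, ψ ≠ 0}, le_antisymm ?_ ?_⟩
  · intro Y φ hφ
    obtain ⟨n, f, hf, ⟨e⟩⟩ := hKS.decomp Y
    exact mem_traceSub_of_iso_biproduct hf M e hφ
  · refine traceSub_le fun W ⟨hW, ψ, hψ, hψ0⟩ => ?_
    have := hsimple W hW ⟨ψ, hψ0⟩
    exact M.mem_of_ne_zero_of_isSimpleModule hψ hψ0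

end Statement

end TIP
end

section
/- Let C be a right rigid Krull–Schmidt monoidal category, Z ∈ 𝓑 = { X ∈ inde C | C(𝟙,X) ≠ 0 } and X an indecomposable object. If the coevaluation co_X : 𝟙 → X^∨⊗X factors as a composition 𝟙 → Z^{⊕k} → X^∨⊗X for some k ∈ ℤ_{>0}, then X is a direct summand of X⊗Z. -/
open CategoryTheory CategoryTheory.Limits CategoryTheory.MonoidalCategory

namespace TIP

attribute [local instance] CategoryTheory.Limits.hasBinaryBiproducts_of_finite_biproducts

universe v u v₂ u₂

/-!
Splitting `co_X = u ≫ v` along the biproduct as `∑ᵢ (u ≫ πᵢ) ≫ (ιᵢ ≫ v)` and applying `iota`,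
the zigzag identity writes `𝟙 X` as a sum of endomorphisms each factoring through `X ⊗ Z`.
As `End X` is local, one summand is a unit, and that splits `X` off `X ⊗ Z`.
-/

section Retract

variable {C : Type u} [Category.{v} C]

theorem isDirectSummand_of_isUnit_comp {X Y : C} (i : X ⟶ Y) (r : Y ⟶ X)
    (h : IsUnit (M := End X) (i ≫ r)) : IsDirectSummand X Y := by
  obtain ⟨w, hw⟩ := h
  refine ⟨i, r ≫ (↑w⁻¹ : End X), ?_⟩
  rw [← Category.assoc, ← hw, ← End.mul_def, w.inv_mul]
  rfl

theorem exists_isDirectSummand_of_sum_comp_eq_id [Preadditive C] {X : C} [IsLocalRing (End X)]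
    {ι : Type*} [Fintype ι] {Y : ι → C} (f : ∀ i, X ⟶ Y i) (g : ∀ i, Y i ⟶ X)
    (h : ∑ i, f i ≫ g i = 𝟙 X) : ∃ i, IsDirectSummand X (Y i) := by
  have hunit : IsUnit (M := End X) (∑ i, f i ≫ g i) := h ▸ isUnit_one
  obtain ⟨i, -, hi⟩ := IsLocalRing.exists_of_isUnit_sum hunit
  exact ⟨i, isDirectSummand_of_isUnit_comp (f i) (g i) hi⟩

end Retract

section Iota

variable {C : Type u} [Category.{v} C] [MonoidalCategory C]

theorem iota_coev {X : C} (D : RightDual X) : iota D D.coev = 𝟙 X :=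
  D.zigzag₁

theorem iota_comp_factors {X W Y : C} (D : RightDual X) (a : 𝟙_ C ⟶ W)
    (b : W ⟶ D.dual ⊗ Y) : ∃ (f : X ⟶ X ⊗ W) (g : X ⊗ W ⟶ Y), iota D (a ≫ b) = f ≫ g :=
  ⟨(ρ_ X).inv ≫ X ◁ a, X ◁ b ≫ (α_ X D.dual Y).inv ≫ D.ev ▷ Y ≫ (λ_ Y).hom, by
    simp [iota, iotaRaw]⟩

theorem iota_sum [Preadditive C] [MonoidalPreadditive C] {X Y : C} (D : RightDual X)
    {ι : Type*} (s : Finset ι) (φ : ι → (𝟙_ C ⟶ D.dual ⊗ Y)) :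
    iota D (∑ i ∈ s, φ i) = ∑ i ∈ s, iota D (φ i) := by
  simp only [iota, iotaRaw, whiskerLeft_sum, Preadditive.sum_comp, Preadditive.comp_sum]

theorem exists_isDirectSummand_tensor_of_coev_eq_sum [Preadditive C] [MonoidalPreadditive C]
    {X : C} (D : RightDual X) [IsLocalRing (End X)] {ι : Type*} [Fintype ι] {W : ι → C}
    (a : ∀ i, 𝟙_ C ⟶ W i) (b : ∀ i, W i ⟶ D.dual ⊗ X) (h : D.coev = ∑ i, a i ≫ b i) :
    ∃ i, IsDirectSummand X (X ⊗ W i) := by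
  choose f g hfg using fun i => iota_comp_factors D (a i) (b i)
  refine exists_isDirectSummand_of_sum_comp_eq_id f g ?_
  rw [← iota_coev D, h, iota_sum]
  exact Finset.sum_congr rfl fun i _ => (hfg i).symm

end Iota

section Statement

variable (C : Type u) [Category.{v} C] [Preadditive C] [MonoidalCategory C]
  [MonoidalPreadditive C] [HasFiniteBiproducts C]

theorem coev_factoring_summand
    (hKS : IsKrullSchmidt C)
    {X Z : C} (DX : RightDual X) (hXind : Indecomposable X)
    (k : ℕ)
    (u : 𝟙_ C ⟶ ⨁ (fun _ : Fin k => Z)) (v : (⨁ (fun _ : Fin k => Z)) ⟶ DX.dual ⊗ X)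
    (hfac : DX.coev = u ≫ v) :
    IsDirectSummand X (X ⊗ Z) := by
  have := hKS.local_end X hXind
  have hsum : DX.coev =
      ∑ i, (u ≫ biproduct.π (fun _ => Z) i) ≫ (biproduct.ι (fun _ => Z) i ≫ v) := by
    conv_lhs => rw [hfac, ← Category.id_comp v, ← biproduct.total]
    simp only [Preadditive.sum_comp, Preadditive.comp_sum, Category.assoc]
  obtain ⟨_, hsummand⟩ := exists_isDirectSummand_tensor_of_coev_eq_sum DX _ _ hsum
  exact hsummand

end Statement

end TIP
end

section
/- Fix a, b ∈ ℕ and partitions λ, μ. (i) If the Littlewood–Richardson coefficient c^ν_{λμ} is nonzero for some partition ν containing the rectangle (b^a), then λ_i + μ_{a+1-i} ≥ b for all 1 ≤ i ≤ a, and equivalently λ^t_j + μ^t_{b+1-j} ≥ a for all 1 ≤ j ≤ b. (ii) If |λ| + |μ| = ab, then c^{(b^a)}_{λμ} = 1 if λ and μ are a×b-dual, and c^{(b^a)}_{λμ} = 0 otherwise. -/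
/-!
In an LR filling the entries grow by at least one down each column of the skew shape, and the
lattice condition forces a run of `m` entries `≥ k` in one row to be matched by at least `m`
entries `k` read no later, so `m ≤ μ_k`. Applied to the cells of the bottom row of the
rectangle, this gives the inequalities of (i); they say that `λ` and `μ` turned by a half turn
cover the rectangle, a condition symmetric under transposition. When `|λ| + |μ| = ab` these
inequalities sum to an equality, so each of them is one, which is duality. Conversely, for dual
`λ` and `μ`, numbering the skew cells of each column `1, 2, …` from the top gives an LR filling,
and it is the only one: every LR filling dominates it entrywise, while all LR fillings of
content `μ` have the same sum of entries.
-/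

namespace LRPaper

/-- The rectangular Young diagram `(b^a)` with `a` rows, each of length `b`. -/
def rect (a b : ℕ) : YoungDiagram where
  cells := Finset.range a ×ˢ Finset.range b
  isLowerSet := by
    intro p q hqp hp
    simp only [Finset.coe_product, Set.mem_prod, Finset.mem_coe, Finset.mem_range] at hp ⊢
    obtain ⟨h1, h2⟩ := hqp
    exact ⟨lt_of_le_of_lt h1 hp.1, lt_of_le_of_lt h2 hp.2⟩

/-- `c` is a cell of the skew shape `ν / λ`. -/
def IsSkewCell (ν lam : YoungDiagram) (c : ℕ × ℕ) : Prop := c ∈ ν ∧ c ∉ lam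

/-- A Littlewood-Richardson filling of the skew shape `ν / λ` of content `μ`:
a semistandard filling (entries `≥ 1` on the skew cells, `0` elsewhere, rows weakly
increasing, columns strictly increasing) such that for each `k ≥ 1` exactly `μ_k`
entries are equal to `k`, satisfying the lattice-word (ballot) condition: in every
prefix of the reverse reading word (each row read right to left, rows read top to
bottom) the value `k` occurs at least as often as `k + 1`. -/
def IsLRFilling (lam mu ν : YoungDiagram) (T : ℕ × ℕ → ℕ) : Prop :=
  lam ≤ ν ∧
  (∀ c : ℕ × ℕ, ¬ IsSkewCell ν lam c → T c = 0) ∧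
  (∀ c : ℕ × ℕ, IsSkewCell ν lam c → 1 ≤ T c) ∧
  (∀ i j1 j2 : ℕ, j1 ≤ j2 → IsSkewCell ν lam (i, j1) → IsSkewCell ν lam (i, j2) →
    T (i, j1) ≤ T (i, j2)) ∧
  (∀ i1 i2 j : ℕ, i1 < i2 → IsSkewCell ν lam (i1, j) → IsSkewCell ν lam (i2, j) →
    T (i1, j) < T (i2, j)) ∧
  (∀ k : ℕ, 1 ≤ k → {c : ℕ × ℕ | IsSkewCell ν lam c ∧ T c = k}.ncard = mu.rowLen (k - 1)) ∧
  (∀ k : ℕ, 1 ≤ k → ∀ i j : ℕ,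
    {c : ℕ × ℕ | IsSkewCell ν lam c ∧ (c.1 < i ∨ (c.1 = i ∧ j ≤ c.2)) ∧ T c = k + 1}.ncard ≤
    {c : ℕ × ℕ | IsSkewCell ν lam c ∧ (c.1 < i ∨ (c.1 = i ∧ j ≤ c.2)) ∧ T c = k}.ncard)

/-- The Littlewood-Richardson coefficient `c^ν_{λμ}`, the number of
Littlewood-Richardson fillings of `ν / λ` of content `μ`. -/
noncomputable def lrCoeff (lam mu ν : YoungDiagram) : ℕ :=
  {T : ℕ × ℕ → ℕ | IsLRFilling lam mu ν T}.ncard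

/-- The partitions `λ` and `μ` are `a × b`-dual:
`λ_i + μ_{a+1-i} = b` for `1 ≤ i ≤ a`, and `λ_{a+1} = 0 = μ_{a+1}`
(rows are `1`-indexed, so `λ_i` is `lam.rowLen (i-1)`). -/
def IsMutuallyDual (a b : ℕ) (lam mu : YoungDiagram) : Prop :=
  (∀ i : ℕ, 1 ≤ i → i ≤ a → lam.rowLen (i - 1) + mu.rowLen (a - i) = b) ∧
  lam.rowLen a = 0 ∧ mu.rowLen a = 0

theorem mem_rect {a b : ℕ} {x : ℕ × ℕ} : x ∈ rect a b ↔ x.1 < a ∧ x.2 < b := by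
  rw [← YoungDiagram.mem_cells]
  exact Finset.mem_product.trans (by simp only [Finset.mem_range])

theorem rowLen_eq_zero_of_le_rect {a b : ℕ} {lam : YoungDiagram} (h : lam ≤ rect a b) :
    lam.rowLen a = 0 := by
  by_contra hne
  have hmem : (a, 0) ∈ lam := YoungDiagram.mem_iff_lt_rowLen.2 (Nat.pos_of_ne_zero hne)
  exact lt_irrefl a (mem_rect.1 (h hmem)).1

theorem sum_range_rowLen_le_card (lam : YoungDiagram) (n : ℕ) :
    ∑ i ∈ Finset.range n, lam.rowLen i ≤ lam.card := by
  simp only [YoungDiagram.rowLen_eq_card, YoungDiagram.row]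
  rw [Finset.sum_card_fiberwise_eq_card_filter]
  exact Finset.card_filter_le _ _

theorem card_filter_colLen_le (lam : YoungDiagram) (m b : ℕ) :
    (Finset.filter (fun c => lam.colLen c ≤ m) (Finset.range b)).card = b - lam.rowLen m := by
  rw [← Nat.card_Ico]
  congr 1
  ext c
  rw [Finset.mem_filter, Finset.mem_range, Finset.mem_Ico, ← not_lt,
    ← YoungDiagram.mem_iff_lt_colLen, YoungDiagram.mem_iff_lt_rowLen, not_lt]
  tauto

section Skew

variable {ν lam : YoungDiagram}

def skewCells (ν lam : YoungDiagram) : Finset (ℕ × ℕ) := ν.cells \ lam.cells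

theorem mem_skewCells {x : ℕ × ℕ} : x ∈ skewCells ν lam ↔ IsSkewCell ν lam x := by
  rw [skewCells, Finset.mem_sdiff, YoungDiagram.mem_cells, YoungDiagram.mem_cells,
    IsSkewCell]

theorem isSkewCell_iff {r c : ℕ} :
    IsSkewCell ν lam (r, c) ↔ (r, c) ∈ ν ∧ lam.colLen c ≤ r := by
  rw [IsSkewCell, YoungDiagram.mem_iff_lt_colLen (μ := lam), not_lt]

theorem isSkewCell_rect_iff {a b r c : ℕ} :
    IsSkewCell (rect a b) lam (r, c) ↔ r < a ∧ c < b ∧ lam.colLen c ≤ r := by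
  rw [isSkewCell_iff, mem_rect, and_assoc]

def readingPrefix (ν lam : YoungDiagram) (T : ℕ × ℕ → ℕ) (i j k : ℕ) :
    Set (ℕ × ℕ) :=
  {c | IsSkewCell ν lam c ∧ (c.1 < i ∨ (c.1 = i ∧ j ≤ c.2)) ∧ T c = k}

theorem finite_isSkewCell_and (p : ℕ × ℕ → Prop) :
    {c | IsSkewCell ν lam c ∧ p c}.Finite :=
  ν.cells.finite_toSet.subset fun x hx => (YoungDiagram.mem_cells x).2 hx.1.1

theorem finite_readingPrefix (T : ℕ × ℕ → ℕ) (i j k : ℕ) :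
    (readingPrefix ν lam T i j k).Finite :=
  finite_isSkewCell_and _

end Skew

namespace IsLRFilling

variable {lam mu ν : YoungDiagram} {T : ℕ × ℕ → ℕ}

theorem le (hT : IsLRFilling lam mu ν T) : lam ≤ ν :=
  hT.1

theorem pos (hT : IsLRFilling lam mu ν T) {x : ℕ × ℕ} (hx : IsSkewCell ν lam x) :
    0 < T x :=
  hT.2.2.1 x hx

theorem eq_zero (hT : IsLRFilling lam mu ν T) {x : ℕ × ℕ} (hx : ¬ IsSkewCell ν lam x) :
    T x = 0 :=
  hT.2.1 x hx

theorem row_mono (hT : IsLRFilling lam mu ν T) {i j₁ j₂ : ℕ} (hj : j₁ ≤ j₂)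
    (h₁ : IsSkewCell ν lam (i, j₁)) (h₂ : IsSkewCell ν lam (i, j₂)) :
    T (i, j₁) ≤ T (i, j₂) :=
  hT.2.2.2.1 i j₁ j₂ hj h₁ h₂

theorem col_strictMono (hT : IsLRFilling lam mu ν T) {i₁ i₂ j : ℕ} (hi : i₁ < i₂)
    (h₁ : IsSkewCell ν lam (i₁, j)) (h₂ : IsSkewCell ν lam (i₂, j)) :
    T (i₁, j) < T (i₂, j) :=
  hT.2.2.2.2.1 i₁ i₂ j hi h₁ h₂

theorem ncard_eq (hT : IsLRFilling lam mu ν T) {k : ℕ} (hk : 1 ≤ k) :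
    {c | IsSkewCell ν lam c ∧ T c = k}.ncard = mu.rowLen (k - 1) :=
  hT.2.2.2.2.2.1 k hk

theorem card_filter_eq (hT : IsLRFilling lam mu ν T) {k : ℕ} (hk : 1 ≤ k) :
    (Finset.filter (fun x => T x = k) (skewCells ν lam)).card = mu.rowLen (k - 1) := by
  rw [← hT.ncard_eq hk, ← Set.ncard_coe_finset]
  congr 1
  ext x
  simp only [Finset.coe_filter, mem_skewCells, Set.mem_ofPred_eq]

theorem ncard_readingPrefix_succ_le (hT : IsLRFilling lam mu ν T) {k : ℕ} (hk : 1 ≤ k)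
    (i j : ℕ) :
    (readingPrefix ν lam T i j (k + 1)).ncard ≤ (readingPrefix ν lam T i j k).ncard :=
  hT.2.2.2.2.2.2 k hk i j

theorem le_fst_add_one (hT : IsLRFilling lam mu ν T) {i j : ℕ} (hij : IsSkewCell ν lam (i, j)) :
    T (i, j) ≤ i + 1 := by
  induction i using Nat.strong_induction_on generalizing j with
  | _ i ih =>
    by_contra! hgt
    obtain ⟨k, hk⟩ : ∃ k, T (i, j) = k + 1 := ⟨T (i, j) - 1, by omega⟩
    have hpos : 0 < (readingPrefix ν lam T i j (k + 1)).ncard :=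
      (Set.ncard_pos (finite_readingPrefix T i j _)).2 ⟨_, hij, Or.inr ⟨rfl, le_rfl⟩, hk⟩
    -- The entry `k` that the lattice condition provides is neither in an earlier row (too
    -- large an entry there) nor to the right in row `i` (rows weakly increase).
    obtain ⟨⟨i', j'⟩, hskew, hbefore, hval⟩ := Set.nonempty_of_ncard_ne_zero
      (hpos.trans_le (hT.ncard_readingPrefix_succ_le (by omega) i j)).ne'
    dsimp only at hbefore hval
    rcases hbefore with hi | ⟨rfl, hj⟩
    · have := ih i' hi hskew
      omega
    · have := hT.row_mono hj hij hskew
      omega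

theorem fst_lt_add_colLen (hT : IsLRFilling lam mu ν T) {r c : ℕ}
    (hrc : IsSkewCell ν lam (r, c)) : r < T (r, c) + lam.colLen c := by
  induction r with
  | zero => have := hT.pos hrc; omega
  | succ r ih =>
    have hpos := hT.pos hrc
    rcases Nat.lt_or_ge r (lam.colLen c) with hr | hr
    · omega
    have hskew : IsSkewCell ν lam (r, c) :=
      isSkewCell_iff.2 ⟨ν.up_left_mem (r.le_add_right 1) le_rfl (isSkewCell_iff.1 hrc).1, hr⟩
    have := hT.col_strictMono r.lt_add_one hskew hrc
    have := ih hskew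
    omega

theorem sub_le_ncard_readingPrefix (hT : IsLRFilling lam mu ν T) {r d e k : ℕ} (hk : 1 ≤ k)
    (hrow : ∀ c, d ≤ c → c < e → IsSkewCell ν lam (r, c) ∧ k ≤ T (r, c)) :
    e - d ≤ (readingPrefix ν lam T r d k).ncard := by
  rcases le_or_gt e d with hed | hde
  · omega
  obtain ⟨hd, hkd⟩ := hrow d le_rfl hde
  -- Either `(r, d)` holds `k` and counts itself, or the whole run is `≥ k + 1` and the lattice
  -- condition passes the bound from `k + 1` down to `k`. Entries of row `r` are at most `r + 1`,
  -- so the recursion on `k` stops.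
  rcases hkd.eq_or_lt with hdk | hdk
  · have ih := sub_le_ncard_readingPrefix hT hk (d := d + 1) (e := e)
      fun c h₁ h₂ => hrow c (by omega) h₂
    have hnotMem : (r, d) ∉ readingPrefix ν lam T r (d + 1) k := by
      rintro ⟨-, h | ⟨-, h⟩, -⟩ <;> simp at h
    have hsub : insert (r, d) (readingPrefix ν lam T r (d + 1) k) ⊆
        readingPrefix ν lam T r d k := by
      rintro x (rfl | ⟨hx, h | ⟨h₁, h₂⟩, hval⟩)
      · exact ⟨hd, Or.inr ⟨rfl, le_rfl⟩, hdk.symm⟩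
      · exact ⟨hx, Or.inl h, hval⟩
      · exact ⟨hx, Or.inr ⟨h₁, by omega⟩, hval⟩
    have := Set.ncard_le_ncard hsub (finite_readingPrefix T r d k)
    rw [Set.ncard_insert_of_notMem hnotMem (finite_readingPrefix T r (d + 1) k)] at this
    omega
  · have hbound := hT.le_fst_add_one hd
    have ih := sub_le_ncard_readingPrefix hT (k := k + 1) (by omega) (d := d) (e := e)
      fun c h₁ h₂ =>
        ⟨(hrow c h₁ h₂).1, hdk.trans_le (hT.row_mono h₁ hd (hrow c h₁ h₂).1)⟩
    exact ih.trans (hT.ncard_readingPrefix_succ_le hk r d)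
termination_by (r + 2 - k, e - d)
decreasing_by
  · exact Prod.Lex.right _ (by omega)
  · exact Prod.Lex.left _ _ (by omega)

theorem sub_le_rowLen (hT : IsLRFilling lam mu ν T) {r d e k : ℕ} (hk : 1 ≤ k)
    (hrow : ∀ c, d ≤ c → c < e → IsSkewCell ν lam (r, c) ∧ k ≤ T (r, c)) :
    e - d ≤ mu.rowLen (k - 1) := by
  refine (hT.sub_le_ncard_readingPrefix hk hrow).trans ?_
  rw [← hT.ncard_eq hk]
  exact Set.ncard_le_ncard (fun x hx => ⟨hx.1, hx.2.2⟩) (finite_isSkewCell_and _)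

theorem sum_eq (hT : IsLRFilling lam mu ν T) {t : Finset ℕ}
    (ht : ∀ x ∈ skewCells ν lam, T x ∈ t) :
    ∑ x ∈ skewCells ν lam, T x = ∑ k ∈ t, k * mu.rowLen (k - 1) := by
  rw [← Finset.sum_fiberwise_of_maps_to ht]
  refine Finset.sum_congr rfl fun k _ => ?_
  rw [Finset.sum_congr rfl fun x hx => (Finset.mem_filter.1 hx).2, Finset.sum_const, smul_eq_mul,
    mul_comm]
  rcases k.eq_zero_or_pos with rfl | hk
  · simp
  · rw [hT.card_filter_eq hk]

theorem eq_of_le {T' : ℕ × ℕ → ℕ} (hT : IsLRFilling lam mu ν T)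
    (hT' : IsLRFilling lam mu ν T')
    (hle : ∀ x, IsSkewCell ν lam x → T' x ≤ T x) : T' = T := by
  classical
  let t := (skewCells ν lam).image T ∪ (skewCells ν lam).image T'
  have hsum : ∑ x ∈ skewCells ν lam, T' x = ∑ x ∈ skewCells ν lam, T x :=
    (hT'.sum_eq (t := t) fun x hx => Finset.mem_union_right _ (Finset.mem_image_of_mem T' hx)).trans
      (hT.sum_eq fun x hx => Finset.mem_union_left _ (Finset.mem_image_of_mem T hx)).symm
  have heq := (Finset.sum_eq_sum_iff_of_le fun x hx => hle x (mem_skewCells.1 hx)).1 hsum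
  funext x
  by_cases hx : IsSkewCell ν lam x
  · exact heq x (mem_skewCells.2 hx)
  · rw [hT.eq_zero hx, hT'.eq_zero hx]

end IsLRFilling

def CoversRect (a b : ℕ) (lam mu : YoungDiagram) : Prop :=
  ∀ i j, i < a → j < b → (i, j) ∉ lam → (a - 1 - i, b - 1 - j) ∈ mu

section CoversRect

variable {a b : ℕ} {lam mu : YoungDiagram}

theorem coversRect_iff :
    CoversRect a b lam mu ↔
      ∀ i, 1 ≤ i → i ≤ a → b ≤ lam.rowLen (i - 1) + mu.rowLen (a - i) := by
  constructor
  · intro h i hi hia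
    by_contra! hlt
    have := h (i - 1) (lam.rowLen (i - 1)) (by omega) (by omega)
      (fun hmem => (YoungDiagram.mem_iff_lt_rowLen.1 hmem).false)
    rw [YoungDiagram.mem_iff_lt_rowLen, show a - 1 - (i - 1) = a - i by omega] at this
    omega
  · intro h i j hi hj hij
    have := h (i + 1) (by omega) (by omega)
    rw [YoungDiagram.mem_iff_lt_rowLen] at hij ⊢
    rw [Nat.add_sub_cancel, show a - (i + 1) = a - 1 - i by omega] at this
    omega

theorem coversRect_transpose :
    CoversRect b a lam.transpose mu.transpose ↔ CoversRect a b lam mu := by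
  simp only [CoversRect, YoungDiagram.mem_transpose, Prod.swap_prod_mk]
  exact ⟨fun h i j hi hj => h j i hj hi, fun h j i hj hi => h i j hi hj⟩

theorem IsLRFilling.coversRect {ν : YoungDiagram} {T : ℕ × ℕ → ℕ}
    (hT : IsLRFilling lam mu ν T) (hν : rect a b ≤ ν) : CoversRect a b lam mu := by
  intro i j hi hj hij
  rw [YoungDiagram.mem_iff_lt_colLen, not_lt] at hij
  have hrow : ∀ c, j ≤ c → c < b →
      IsSkewCell ν lam (a - 1, c) ∧ a - i ≤ T (a - 1, c) := by
    intro c hjc hcb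
    have hcol := lam.colLen_anti j c hjc
    have hskew : IsSkewCell ν lam (a - 1, c) :=
      isSkewCell_iff.2 ⟨hν (mem_rect.2 ⟨by omega, hcb⟩), by omega⟩
    exact ⟨hskew, by have := hT.fst_lt_add_colLen hskew; omega⟩
  have := hT.sub_le_rowLen (by omega) hrow
  rw [YoungDiagram.mem_iff_lt_rowLen, show a - 1 - i = a - i - 1 by omega]
  omega

theorem isMutuallyDual_of_coversRect (hcov : CoversRect a b lam mu) (hlam : lam ≤ rect a b)
    (hcard : lam.card + mu.card = a * b) : IsMutuallyDual a b lam mu := by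
  have hge : ∀ i ∈ Finset.range a, b ≤ lam.rowLen i + mu.rowLen (a - 1 - i) := by
    intro i hi
    have := coversRect_iff.1 hcov (i + 1) (by omega) (Finset.mem_range.1 hi)
    rwa [Nat.add_sub_cancel, show a - (i + 1) = a - 1 - i by omega] at this
  have hsum : ∑ i ∈ Finset.range a, (lam.rowLen i + mu.rowLen (a - 1 - i)) + mu.rowLen a ≤
      a * b := by
    have hlam := sum_range_rowLen_le_card lam a
    have hmu := sum_range_rowLen_le_card mu (a + 1)
    rw [Finset.sum_range_succ] at hmu
    rw [Finset.sum_add_distrib, Finset.sum_range_reflect (fun i => mu.rowLen i) a]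
    omega
  have hlow : a * b ≤ ∑ i ∈ Finset.range a, (lam.rowLen i + mu.rowLen (a - 1 - i)) := by
    simpa [mul_comm] using Finset.card_nsmul_le_sum _ _ b hge
  have hrows := (Finset.sum_eq_sum_iff_of_le hge).1 (by
    rw [Finset.sum_const, Finset.card_range, smul_eq_mul]; omega)
  refine ⟨fun i hi hia => ?_, rowLen_eq_zero_of_le_rect hlam, by omega⟩
  have := hrows (i - 1) (Finset.mem_range.2 (by omega))
  rw [show a - 1 - (i - 1) = a - i by omega] at this
  exact this.symm

theorem le_rect_of_isMutuallyDual (hd : IsMutuallyDual a b lam mu) : lam ≤ rect a b := by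
  rintro ⟨i, j⟩ hx
  have hj := YoungDiagram.mem_iff_lt_rowLen.1 hx
  have hia : i < a := by
    by_contra! hai
    have := lam.rowLen_anti a i hai
    have := hd.2.1
    omega
  have := hd.1 (i + 1) (by omega) (by omega)
  rw [Nat.add_sub_cancel] at this
  exact mem_rect.2 ⟨hia, by omega⟩

end CoversRect

section ColIndexFilling

variable {ν lam mu : YoungDiagram}

open Classical in
noncomputable def colIndexFilling (ν lam : YoungDiagram) : ℕ × ℕ → ℕ := fun x =>
  if IsSkewCell ν lam x then x.1 + 1 - lam.colLen x.2 else 0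

theorem colIndexFilling_of_isSkewCell {r c : ℕ} (h : IsSkewCell ν lam (r, c)) :
    colIndexFilling ν lam (r, c) = r + 1 - lam.colLen c :=
  if_pos h

theorem IsLRFilling.colIndexFilling_le {T : ℕ × ℕ → ℕ} (hT : IsLRFilling lam mu ν T)
    {x : ℕ × ℕ} (hx : IsSkewCell ν lam x) : colIndexFilling ν lam x ≤ T x := by
  obtain ⟨r, c⟩ := x
  have := hT.fst_lt_add_colLen hx
  rw [colIndexFilling_of_isSkewCell hx]
  omega

theorem ncard_readingPrefix_colIndexFilling_succ_le {k : ℕ} (hk : 1 ≤ k) (i j : ℕ) :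
    (readingPrefix ν lam (colIndexFilling ν lam) i j (k + 1)).ncard ≤
      (readingPrefix ν lam (colIndexFilling ν lam) i j k).ncard := by
  refine Set.ncard_le_ncard_of_injOn (fun x => (x.1 - 1, x.2)) ?_ ?_
    (finite_readingPrefix _ i j k)
  · rintro ⟨r, c⟩ ⟨hskew, hbefore, hval⟩
    rw [colIndexFilling_of_isSkewCell hskew] at hval
    obtain ⟨hν, hcol⟩ := isSkewCell_iff.1 hskew
    have hskew' : IsSkewCell ν lam (r - 1, c) :=
      isSkewCell_iff.2 ⟨ν.up_left_mem (Nat.sub_le r 1) le_rfl hν, by omega⟩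
    refine ⟨hskew', Or.inl (by dsimp only at hbefore ⊢; omega), ?_⟩
    rw [colIndexFilling_of_isSkewCell hskew']
    omega
  · rintro ⟨r, c⟩ ⟨hskew, -, hval⟩ ⟨r', c'⟩ ⟨hskew', -, hval'⟩ h
    rw [colIndexFilling_of_isSkewCell hskew] at hval
    rw [colIndexFilling_of_isSkewCell hskew'] at hval'
    simp only [Prod.mk.injEq] at h ⊢
    obtain ⟨h, rfl⟩ := h
    omega

variable {a b : ℕ}

theorem ncard_colIndexFilling_eq (hd : IsMutuallyDual a b lam mu) {k : ℕ} (hk : 1 ≤ k) :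
    {x | IsSkewCell (rect a b) lam x ∧ colIndexFilling (rect a b) lam x = k}.ncard =
      mu.rowLen (k - 1) := by
  rcases Nat.lt_or_ge a k with hak | hka
  · have hempty :
        {x | IsSkewCell (rect a b) lam x ∧ colIndexFilling (rect a b) lam x = k} = ∅ := by
      refine Set.eq_empty_of_forall_notMem fun ⟨r, c⟩ ⟨hskew, hval⟩ => ?_
      rw [colIndexFilling_of_isSkewCell hskew] at hval
      have := (isSkewCell_rect_iff.1 hskew).1
      omega
    have := mu.rowLen_anti a (k - 1) (by omega)
    rw [hempty, Set.ncard_empty]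
    have := hd.2.2
    omega
  · have himage : {x | IsSkewCell (rect a b) lam x ∧ colIndexFilling (rect a b) lam x = k} =
        (fun c => (k - 1 + lam.colLen c, c)) ''
          ↑(Finset.filter (fun c => lam.colLen c ≤ a - k) (Finset.range b)) := by
      ext ⟨r, c⟩
      simp only [Set.mem_ofPred_eq, Set.mem_image, Finset.coe_filter, Finset.mem_range,
        Prod.mk.injEq]
      constructor
      · rintro ⟨hskew, hval⟩
        rw [colIndexFilling_of_isSkewCell hskew] at hval
        obtain ⟨hr, hc, hcol⟩ := isSkewCell_rect_iff.1 hskew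
        exact ⟨c, ⟨hc, by omega⟩, by omega, rfl⟩
      · rintro ⟨c, ⟨hc, hcol⟩, rfl, rfl⟩
        have hskew : IsSkewCell (rect a b) lam (k - 1 + lam.colLen c, c) :=
          isSkewCell_rect_iff.2 ⟨by omega, hc, by omega⟩
        rw [colIndexFilling_of_isSkewCell hskew]
        exact ⟨hskew, by omega⟩
    rw [himage, Set.ncard_image_of_injective _ fun c c' h => (Prod.mk.inj h).2,
      Set.ncard_coe_finset, card_filter_colLen_le]
    have := hd.1 (a - k + 1) (by omega) (by omega)
    rw [show a - k + 1 - 1 = a - k by omega, show a - (a - k + 1) = k - 1 by omega] at this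
    omega

theorem isLRFilling_colIndexFilling (hd : IsMutuallyDual a b lam mu) :
    IsLRFilling lam mu (rect a b) (colIndexFilling (rect a b) lam) := by
  refine ⟨le_rect_of_isMutuallyDual hd, fun x hx => if_neg hx, ?_, ?_, ?_,
    fun k hk => ncard_colIndexFilling_eq hd hk,
    fun k hk i j => ncard_readingPrefix_colIndexFilling_succ_le hk i j⟩
  · rintro ⟨r, c⟩ hskew
    have := (isSkewCell_iff.1 hskew).2
    rw [colIndexFilling_of_isSkewCell hskew]
    omega
  · intro i j₁ j₂ hj h₁ h₂
    have := (isSkewCell_iff.1 h₂).2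
    rw [colIndexFilling_of_isSkewCell h₁, colIndexFilling_of_isSkewCell h₂]
    have := lam.colLen_anti j₁ j₂ hj
    omega
  · intro i₁ i₂ j hi h₁ h₂
    have := (isSkewCell_iff.1 h₁).2
    rw [colIndexFilling_of_isSkewCell h₁, colIndexFilling_of_isSkewCell h₂]
    omega

end ColIndexFilling

/-- **Lemma (rectangles and Littlewood-Richardson coefficients).** Fix `a, b ∈ ℕ` and
partitions `λ, μ`.
(i) If `c^ν_{λμ} ≠ 0` for some `ν ⊇ (b^a)`, then `λ_i + μ_{a+1-i} ≥ b` for `1 ≤ i ≤ a`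
and, equivalently, `λ^t_j + μ^t_{b+1-j} ≥ a` for `1 ≤ j ≤ b`.
(ii) If `|λ| + |μ| = ab`, then `c^{(b^a)}_{λμ} = 1` when `λ` and `μ` are `a × b`-dual,
and `c^{(b^a)}_{λμ} = 0` otherwise. -/
theorem lr_rectangle (a b : ℕ) (lam mu : YoungDiagram) :
    ((∃ ν : YoungDiagram, rect a b ≤ ν ∧ lrCoeff lam mu ν ≠ 0) →
      ((∀ i : ℕ, 1 ≤ i → i ≤ a → b ≤ lam.rowLen (i - 1) + mu.rowLen (a - i)) ∧
       (∀ j : ℕ, 1 ≤ j → j ≤ b →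
          a ≤ lam.transpose.rowLen (j - 1) + mu.transpose.rowLen (b - j)))) ∧
    (lam.card + mu.card = a * b →
      (IsMutuallyDual a b lam mu → lrCoeff lam mu (rect a b) = 1) ∧
      (¬ IsMutuallyDual a b lam mu → lrCoeff lam mu (rect a b) = 0)) := by
  refine ⟨fun ⟨ν, hν, hne⟩ => ?_, fun hcard => ⟨fun hd => ?_, fun hnd => ?_⟩⟩
  · obtain ⟨T, hT⟩ := Set.nonempty_of_ncard_ne_zero hne
    have hcov := hT.coversRect hν
    exact ⟨coversRect_iff.1 hcov, coversRect_iff.1 (coversRect_transpose.2 hcov)⟩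
  · have h₀ := isLRFilling_colIndexFilling hd
    exact Set.ncard_eq_one.2 ⟨_, Set.eq_singleton_iff_unique_mem.2
      ⟨h₀, fun T hT => (hT.eq_of_le h₀ fun x hx => hT.colIndexFilling_le hx).symm⟩⟩
  · by_contra hne
    obtain ⟨T, hT⟩ := Set.nonempty_of_ncard_ne_zero hne
    exact hnd (isMutuallyDual_of_coversRect (hT.coversRect le_rfl) hT.le hcard)

end LRPaper
end
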